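/- arXiv:1511.00721 — 5 statements merged into one kernel-verified Lean document; each statement's English description precedes it below -/
import Mathlib

section
/- The function s(t) = |t|/(1 + a|t|/2) - |t| (for a ≥ 0) is concave on ℝ. -/
/-!
With `c = a / 2` the function is `h |t|`, where `h u = u / (1 + c u) - u`. On `u ≥ 0`, `h` is
concave, since the Jensen gap of `u / (1 + c u)` at weights `λ, μ` is
`λ μ c (x - y)² / ((1 + c x) (1 + c y) (1 + c (λ x + μ y))) ≥ 0`, and antitone, since
`u / (1 + c u)` has slope at most `1`. A concave antitone function of the convex `|t|` is concave.
-/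

open Set

section

variable {c : ℝ}

lemma concaveOn_div_one_add_mul (hc : 0 ≤ c) :
    ConcaveOn ℝ (Ici 0) fun u : ℝ => u / (1 + c * u) := by
  refine ⟨convex_Ici 0, fun x (hx : 0 ≤ x) y (hy : 0 ≤ y) a b ha hb hab => ?_⟩
  obtain rfl : b = 1 - a := by linarith
  have hm : 0 ≤ a * x + (1 - a) * y := by positivity
  have hDx : 0 < 1 + c * x := by positivity
  have hDy : 0 < 1 + c * y := by positivity
  have hDm : 0 < 1 + c * (a * x + (1 - a) * y) := by positivity
  have jensen_gap : (a * x + (1 - a) * y) / (1 + c * (a * x + (1 - a) * y))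
      - (a * (x / (1 + c * x)) + (1 - a) * (y / (1 + c * y)))
      = a * (1 - a) * c * (x - y) ^ 2
        / ((1 + c * x) * (1 + c * y) * (1 + c * (a * x + (1 - a) * y))) := by
    field_simp
    ring
  have : 0 ≤ a * (1 - a) * c * (x - y) ^ 2
      / ((1 + c * x) * (1 + c * y) * (1 + c * (a * x + (1 - a) * y))) := by
    have : 0 ≤ 1 - a := by linarith
    positivity
  simp only [smul_eq_mul]
  linarith

lemma antitoneOn_div_one_add_mul_sub_self (hc : 0 ≤ c) :
    AntitoneOn (fun u : ℝ => u / (1 + c * u) - u) (Ici 0) := by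
  intro x (hx : 0 ≤ x) y (hy : 0 ≤ y) hxy
  have hDx : 0 < 1 + c * x := by positivity
  have hDy : 0 < 1 + c * y := by positivity
  have hdiff : y / (1 + c * y) - x / (1 + c * x) = (y - x) / ((1 + c * x) * (1 + c * y)) := by
    field_simp
    ring
  have hD : 1 ≤ (1 + c * x) * (1 + c * y) := by nlinarith [mul_nonneg hc hx, mul_nonneg hc hy]
  have : (y - x) / ((1 + c * x) * (1 + c * y)) ≤ y - x := div_le_self (by linarith) hD
  show y / (1 + c * y) - y ≤ x / (1 + c * x) - x
  linarith

lemma concaveOn_div_one_add_mul_sub_self (hc : 0 ≤ c) :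
    ConcaveOn ℝ (Ici 0) fun u : ℝ => u / (1 + c * u) - u :=
  (concaveOn_div_one_add_mul hc).sub (convexOn_id (convex_Ici 0))

end

lemma Real.image_univ_norm : (‖·‖ : ℝ → ℝ) '' univ = Ici 0 := by
  ext u
  exact ⟨fun ⟨t, _, htu⟩ => htu ▸ norm_nonneg t, fun hu => ⟨u, trivial, Real.norm_of_nonneg hu⟩⟩

theorem stmt_0 (a : ℝ) (ha : 0 ≤ a) :
    ConcaveOn ℝ Set.univ (fun t : ℝ => |t| / (1 + a * |t| / 2) - |t|) := by
  have hc : 0 ≤ a / 2 := by positivity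
  have h := (Real.image_univ_norm ▸ concaveOn_div_one_add_mul_sub_self hc).comp_convexOn
    (convexOn_univ_norm (E := ℝ)) (Real.image_univ_norm ▸ antitoneOn_div_one_add_mul_sub_self hc)
  convert h using 2 with t
  simp only [Function.comp_apply, Real.norm_eq_abs, mul_div_right_comm a]
end

section
/- For a > 0, the function s(t) = (1/a)·log(1 + a|t|) - |t| is concave on ℝ. -/
/-! With `g u = (1/a) log (1 + a u) - u`, the function is `g ∘ |·|`. On `[0, ∞)`, `g` is concave
(a concave function of an affine map, minus a linear one) and nonincreasing (because
`log (1 + a y) - log (1 + a x) ≤ a (y - x)`), and a concave nonincreasing function of a convex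
function is concave. -/

open Set Real

theorem ConcaveOn.comp_norm_of_antitoneOn {E : Type*} [NormedAddCommGroup E] [NormedSpace ℝ E]
    [NontrivialTopology E] {g : ℝ → ℝ} (hg : ConcaveOn ℝ (Ici 0) g) (hg' : AntitoneOn g (Ici 0)) :
    ConcaveOn ℝ univ (fun x : E => g ‖x‖) := by
  have himage : (norm : E → ℝ) '' univ = Ici 0 := by rw [image_univ, range_norm]
  exact (himage ▸ hg).comp_convexOn convexOn_univ_norm (himage ▸ hg')

theorem Real.log_sub_log_le_sub {x y : ℝ} (hx : 1 ≤ x) (hxy : x ≤ y) :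
    log y - log x ≤ y - x := by
  have hx₀ : 0 < x := by linarith
  calc log y - log x = log (y / x) := (log_div (by linarith) hx₀.ne').symm
    _ ≤ y / x - 1 := log_le_sub_one_of_pos (div_pos (by linarith) hx₀)
    _ = (y - x) / x := by field_simp
    _ ≤ y - x := div_le_self (by linarith) hx

section LogPenalty

variable {a : ℝ} (ha : 0 < a)
include ha

theorem concaveOn_log_one_add_mul_sub :
    ConcaveOn ℝ (Ici 0) (fun u : ℝ => 1 / a * log (1 + a * u) - u) := by
  have hlog : ConcaveOn ℝ (Ici 0) (fun u : ℝ => log (1 + a * u)) := by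
    have h := strictConcaveOn_log_Ioi.concaveOn.comp_affineMap
      (AffineMap.const ℝ ℝ (1 : ℝ) + a • AffineMap.id ℝ ℝ)
    refine (h.subset (fun u hu => ?_) (convex_Ici 0)).congr fun u _ => ?_
    · simp only [AffineMap.coe_add, AffineMap.coe_const, Function.const_one, AffineMap.coe_smul,
        AffineMap.coe_id, mem_preimage, Pi.add_apply, Pi.one_apply, Pi.smul_apply, id_eq,
        smul_eq_mul, mem_Ioi]
      nlinarith [mem_Ici.mp hu]
    · simp [smul_eq_mul]
  exact (hlog.smul (by positivity)).sub (convexOn_id (convex_Ici 0))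

theorem antitoneOn_log_one_add_mul_sub :
    AntitoneOn (fun u : ℝ => 1 / a * log (1 + a * u) - u) (Ici 0) := by
  intro x hx y _ hxy
  have hlog : log (1 + a * y) - log (1 + a * x) ≤ a * (y - x) := by
    have := log_sub_log_le_sub (x := 1 + a * x) (y := 1 + a * y)
      (by nlinarith [mem_Ici.mp hx]) (by nlinarith)
    linarith
  have : 1 / a * (log (1 + a * y) - log (1 + a * x)) ≤ y - x := by
    rw [div_mul_eq_mul_div, one_mul, div_le_iff₀ ha]
    linarith
  dsimp only
  linarith

end LogPenalty

theorem stmt_1 (a : ℝ) (ha : 0 < a) :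
    ConcaveOn ℝ Set.univ (fun t : ℝ => (1 / a) * Real.log (1 + a * |t|) - |t|) :=
  (concaveOn_log_one_add_mul_sub ha).comp_norm_of_antitoneOn
    (antitoneOn_log_one_add_mul_sub ha)
end

section
/- Let s : ℝ → ℝ be concave, even (s(-t) = s(t)), with s(0) = 0, and let 0 ≤ r ≤ 1. Then for all x₁ ≤ 0 ≤ x₂ with x₂ ≥ -x₁: s(r·x₁ + x₂) + r·s(x₁) ≥ s(x₂). -/
/-!
Put `a = -x₁ ≥ 0`, so `s x₁ = s a` and `r * x₁ + x₂ = x₂ - r a ≥ (1 - r) a`. Increments of a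
concave function over intervals of the fixed length `r a` decrease as the interval moves right, so
`s x₂ - s (x₂ - r a) ≤ s a - s ((1 - r) a)`, and concavity between `0` and `a` together with
`s 0 = 0` gives `s ((1 - r) a) ≥ (1 - r) s a`.
-/

open Set

section

variable {𝕜 : Type*} [Field 𝕜] [LinearOrder 𝕜] [IsStrictOrderedRing 𝕜] {s : Set 𝕜} {f : 𝕜 → 𝕜}

theorem ConcaveOn.map_add_sub_map_le_of_le (hf : ConcaveOn 𝕜 s f) {x y h : 𝕜} (hx : x ∈ s)
    (hy : y + h ∈ s) (hxy : x ≤ y) (hh : 0 ≤ h) :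
    f (y + h) - f y ≤ f (x + h) - f x := by
  set D := y + h - x
  rcases (show 0 ≤ D by linarith).eq_or_lt with hD | hD
  · obtain rfl : h = 0 := by linarith
    obtain rfl : x = y := by linarith
    simp
  -- `x + h` and `y` are the convex combinations of `x` and `y + h` with swapped weights.
  set t := h / D
  have ht₀ : 0 ≤ t := div_nonneg hh hD.le
  have ht₁ : 0 ≤ 1 - t := by
    rw [sub_nonneg, div_le_one hD]
    linarith
  have hxh : (1 - t) • x + t • (y + h) = x + h := by
    simp only [smul_eq_mul, t]
    field_simp
    ring
  have hy' : t • x + (1 - t) • (y + h) = y := by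
    simp only [smul_eq_mul, t]
    field_simp
    ring
  have h₁ := hf.2 hx hy ht₁ ht₀ (sub_add_cancel 1 t)
  have h₂ := hf.2 hx hy ht₀ ht₁ (add_sub_cancel t 1)
  rw [hxh] at h₁
  rw [hy'] at h₂
  simp only [smul_eq_mul] at h₁ h₂
  linarith

theorem ConcaveOn.mul_map_le_map_mul (hf : ConcaveOn 𝕜 s f) (h₀ : (0 : 𝕜) ∈ s) (hf₀ : 0 ≤ f 0)
    {x t : 𝕜} (hx : x ∈ s) (ht₀ : 0 ≤ t) (ht₁ : t ≤ 1) :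
    t * f x ≤ f (t * x) := by
  have := hf.2 hx h₀ ht₀ (sub_nonneg.2 ht₁) (add_sub_cancel t 1)
  simp only [smul_eq_mul, mul_zero, add_zero] at this
  linarith [mul_nonneg (sub_nonneg.2 ht₁) hf₀]

end

theorem stmt_13_general (s : ℝ → ℝ) (hs : ConcaveOn ℝ Set.univ s)
    (heven : ∀ t, s (-t) = s t) (h0 : s 0 = 0)
    (r : ℝ) (hr0 : 0 ≤ r) (hr1 : r ≤ 1)
    (x₁ x₂ : ℝ) (hx₁ : x₁ ≤ 0) (hx : -x₁ ≤ x₂) :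
    s x₂ ≤ s (r * x₁ + x₂) + r * s x₁ := by
  have hinc : s x₂ - s (r * x₁ + x₂) ≤ s (-x₁) - s ((1 - r) * -x₁) := by
    have := hs.map_add_sub_map_le_of_le (mem_univ ((1 - r) * -x₁))
      (mem_univ (r * x₁ + x₂ + -(r * x₁))) (by linarith) (by nlinarith)
    rwa [show r * x₁ + x₂ + -(r * x₁) = x₂ by ring,
      show (1 - r) * -x₁ + -(r * x₁) = -x₁ by ring] at this
  have hscale : (1 - r) * s (-x₁) ≤ s ((1 - r) * -x₁) :=
    hs.mul_map_le_map_mul (mem_univ 0) h0.ge (mem_univ _) (by linarith) (by linarith)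
  rw [heven] at hinc hscale
  linarith

theorem stmt_13 (s : ℝ → ℝ) (hs : ConcaveOn ℝ Set.univ s)
    (heven : ∀ t, s (-t) = s t) (h0 : s 0 = 0)
    (r : ℝ) (hr0 : 0 ≤ r) (hr1 : r ≤ 1)
    (x₁ x₂ : ℝ) (hx₁ : x₁ ≤ 0) (hx₂ : 0 ≤ x₂) (hx : -x₁ ≤ x₂) :
    s x₂ ≤ s (r * x₁ + x₂) + r * s x₁ :=
  stmt_13_general s hs heven h0 r hr0 hr1 x₁ x₂ hx₁ hx
end

section
/- Let h : ℤ → ℝ be finitely supported with discrete-time Fourier transform H(ω) = Σₙ hₙ·e^{-iωn}, and let p₀, p₁ ∈ ℝ with P(ω) = p₀ + 2p₁·cos(ω). If 0 ≤ P(ω) ≤ |H(ω)|² for all ω ∈ [-π, π], then for every N the N×N symmetric tridiagonal Toeplitz matrix P (diagonal p₀, off-diagonal p₁) satisfies 0 ⪯ P ⪯ HᵀH, where H is the N-column convolution matrix of h. -/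
/-!
For finitely supported even coefficients `a : ℤ → ℝ`, the quadratic form of the Toeplitz matrix
`(a (p j - p k))_{j,k}` equals `(2π)⁻¹ ∫_{-π}^{π} A(ω) |∑ⱼ xⱼ e^{i pⱼ ω}|² dω`, where
`A(ω) = ∑ₘ aₘ cos (m ω)` is its symbol, because `∫ A(ω) cos (l ω) dω = 2π a_l`. Hence a symbol that
is nonnegative on `[-π, π]` gives a positive semidefinite matrix. `P` is the Toeplitz matrix with
symbol `p₀ + 2 p₁ cos ω`, and `HᵀH` is the Toeplitz matrix of the autocorrelation
`rₘ = ∑ₙ hₙ hₙ₊ₘ`, whose symbol is `|H(ω)|²`; apply this to `P` and to `HᵀH - P`.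
-/

open Real Finset Matrix

theorem integral_cos_int_mul (m : ℤ) :
    ∫ ω in -π..π, cos (m * ω) = if m = 0 then 2 * π else 0 := by
  split_ifs with hm
  · simp [hm]
    ring
  · have hm' : (m : ℝ) ≠ 0 := by exact_mod_cast hm
    rw [intervalIntegral.integral_comp_mul_left (fun x => cos x) hm', integral_cos, mul_neg,
      sin_neg, sin_int_mul_pi, sub_neg_eq_add, add_zero, smul_zero]

theorem integral_cos_int_mul_mul_cos_int_mul (m l : ℤ) :
    ∫ ω in -π..π, cos (m * ω) * cos (l * ω) =
      (if m + l = 0 then π else 0) + if m = l then π else 0 := by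
  have hprod : ∀ ω : ℝ, cos (m * ω) * cos (l * ω) =
      cos (((m + l : ℤ) : ℝ) * ω) / 2 + cos (((m - l : ℤ) : ℝ) * ω) / 2 := fun ω => by
    push_cast
    rw [add_mul, sub_mul, cos_add, cos_sub]
    ring
  simp_rw [hprod]
  rw [intervalIntegral.integral_add (Continuous.intervalIntegrable (by fun_prop) _ _)
    (Continuous.intervalIntegrable (by fun_prop) _ _), intervalIntegral.integral_div,
    intervalIntegral.integral_div, integral_cos_int_mul, integral_cos_int_mul]
  simp only [sub_eq_zero]
  split_ifs <;> ring

theorem sq_norm_sum_mul_exp {ι : Type*} (s : Finset ι) (c θ : ι → ℝ) :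
    ‖∑ i ∈ s, (c i : ℂ) * Complex.exp (θ i * Complex.I)‖ ^ 2 =
      ∑ i ∈ s, ∑ j ∈ s, c i * c j * cos (θ i - θ j) := by
  rw [Complex.sq_norm, ← Complex.ofReal_re (Complex.normSq _), ← Complex.mul_conj, map_sum,
    sum_mul_sum, Complex.re_sum]
  refine sum_congr rfl fun i _ => ?_
  rw [Complex.re_sum]
  refine sum_congr rfl fun j _ => ?_
  rw [map_mul, Complex.conj_ofReal, ← Complex.exp_conj, map_mul, Complex.conj_ofReal,
    Complex.conj_I, mul_mul_mul_comm, ← Complex.exp_add, ← Complex.ofReal_mul, mul_neg,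
    ← sub_eq_add_neg, ← sub_mul, ← Complex.ofReal_sub, Complex.re_ofReal_mul, Complex.exp_ofReal_mul_I_re]

noncomputable def toeplitzSymbol (a : ℤ → ℝ) (ω : ℝ) : ℝ :=
  ∑ᶠ m : ℤ, a m * cos (m * ω)

def toeplitz {ι : Type*} (a : ℤ → ℝ) (p : ι → ℤ) : Matrix ι ι ℝ :=
  Matrix.of fun j k => a (p j - p k)

section Toeplitz

variable {a b : ℤ → ℝ}

theorem toeplitzSymbol_eq_sum (ha : (Function.support a).Finite) (ω : ℝ) :
    toeplitzSymbol a ω = ∑ m ∈ ha.toFinset, a m * cos (m * ω) :=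
  finsum_eq_sum_of_support_subset _ fun _ hm => ha.mem_toFinset.2 (left_ne_zero_of_mul hm)

theorem continuous_toeplitzSymbol (ha : (Function.support a).Finite) :
    Continuous (toeplitzSymbol a) := by
  rw [funext (toeplitzSymbol_eq_sum ha)]
  fun_prop

theorem toeplitzSymbol_sub (ha : (Function.support a).Finite) (hb : (Function.support b).Finite)
    (ω : ℝ) : toeplitzSymbol (a - b) ω = toeplitzSymbol a ω - toeplitzSymbol b ω := by
  simp only [toeplitzSymbol, Pi.sub_apply, sub_mul]
  exact finsum_sub_distrib (ha.subset fun m hm => left_ne_zero_of_mul hm)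
    (hb.subset fun m hm => left_ne_zero_of_mul hm)

theorem toeplitz_sub {ι : Type*} (p : ι → ℤ) :
    toeplitz (a - b) p = toeplitz a p - toeplitz b p :=
  rfl

theorem integral_toeplitzSymbol_mul_cos (ha : (Function.support a).Finite) (l : ℤ) :
    ∫ ω in -π..π, toeplitzSymbol a ω * cos (l * ω) = π * (a (-l) + a l) := by
  have hzero : ∀ n, (if n ∈ ha.toFinset then a n * π else 0) = a n * π := fun n => by
    split_ifs with hn
    · rfl
    · rw [Set.Finite.mem_toFinset, Function.notMem_support] at hn
      rw [hn, zero_mul]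
  simp_rw [toeplitzSymbol_eq_sum ha, sum_mul, mul_assoc]
  rw [intervalIntegral.integral_finsetSum
    fun m _ => Continuous.intervalIntegrable (by fun_prop) _ _]
  simp_rw [intervalIntegral.integral_const_mul, integral_cos_int_mul_mul_cos_int_mul, mul_add,
    sum_add_distrib, mul_ite, mul_zero, add_eq_zero_iff_eq_neg, sum_ite_eq', hzero]
  ring

theorem two_pi_mul_dotProduct_toeplitz_mulVec (ha : (Function.support a).Finite)
    (heven : ∀ m, a (-m) = a m) {ι : Type*} [Fintype ι] (p : ι → ℤ) (x : ι → ℝ) :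
    2 * π * (x ⬝ᵥ toeplitz a p *ᵥ x) = ∫ ω in -π..π,
      toeplitzSymbol a ω * ‖∑ j, (x j : ℂ) * Complex.exp ((p j * ω : ℝ) * Complex.I)‖ ^ 2 := by
  simp_rw [sq_norm_sum_mul_exp, ← sub_mul, ← Int.cast_sub, mul_sum]
  have hcont := continuous_toeplitzSymbol ha
  rw [intervalIntegral.integral_finsetSum
    fun j _ => (by fun_prop : Continuous _).intervalIntegrable _ _]
  simp only [dotProduct, mulVec, toeplitz, of_apply, mul_sum]
  refine sum_congr rfl fun j _ => ?_
  rw [intervalIntegral.integral_finsetSum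
    fun k _ => (by fun_prop : Continuous _).intervalIntegrable _ _]
  refine sum_congr rfl fun k _ => ?_
  simp_rw [mul_left_comm (toeplitzSymbol a _) (x j * x k)]
  rw [intervalIntegral.integral_const_mul, integral_toeplitzSymbol_mul_cos ha, heven]
  ring

theorem posSemidef_toeplitz (ha : (Function.support a).Finite) (heven : ∀ m, a (-m) = a m)
    (hsymbol : ∀ ω ∈ Set.Icc (-π) π, 0 ≤ toeplitzSymbol a ω) {ι : Type*} [Fintype ι]
    (p : ι → ℤ) : (toeplitz a p).PosSemidef := by
  refine .of_dotProduct_mulVec_nonneg ?_ fun x => ?_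
  · ext j k
    simp [toeplitz, ← heven (p j - p k)]
  · have hint : 0 ≤ 2 * π * (x ⬝ᵥ toeplitz a p *ᵥ x) := by
      rw [two_pi_mul_dotProduct_toeplitz_mulVec ha heven]
      exact intervalIntegral.integral_nonneg (by linarith [pi_pos])
        fun ω hω => mul_nonneg (hsymbol ω hω) (sq_nonneg _)
    rw [star_trivial]
    exact nonneg_of_mul_nonneg_right hint (by positivity)

end Toeplitz

noncomputable def autocorrelation (h : ℤ → ℝ) (m : ℤ) : ℝ :=
  ∑ᶠ n : ℤ, h n * h (n + m)

section Autocorrelation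

variable {h : ℤ → ℝ}

theorem autocorrelation_neg (m : ℤ) : autocorrelation h (-m) = autocorrelation h m := by
  rw [autocorrelation, ← finsum_comp_equiv (Equiv.addRight m)]
  simp only [Equiv.coe_addRight, add_neg_cancel_right]
  exact finsum_congr fun n => mul_comm _ _

theorem finite_support_autocorrelation (hh : (Function.support h).Finite) :
    (Function.support (autocorrelation h)).Finite := by
  refine (hh.sub hh).subset fun m hm => ?_
  obtain ⟨n, hn⟩ : ∃ n, h n * h (n + m) ≠ 0 := by
    by_contra! hzero
    exact hm (finsum_eq_zero_of_forall_eq_zero hzero)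
  exact ⟨n + m, right_ne_zero_of_mul hn, n, left_ne_zero_of_mul hn, add_sub_cancel_left n m⟩

theorem toeplitzSymbol_autocorrelation (hh : (Function.support h).Finite) (ω : ℝ) :
    toeplitzSymbol (autocorrelation h) ω =
      ‖∑ᶠ n : ℤ, (h n : ℂ) * Complex.exp (-Complex.I * ω * n)‖ ^ 2 := by
  set S := hh.toFinset
  have hS : ∀ {n}, h n ≠ 0 → n ∈ S := fun hn => hh.mem_toFinset.2 hn
  have hH : ∑ᶠ n : ℤ, (h n : ℂ) * Complex.exp (-Complex.I * ω * n) =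
      ∑ n ∈ S, (h n : ℂ) * Complex.exp ((-(n * ω) : ℝ) * Complex.I) := by
    rw [finsum_eq_sum_of_support_subset _
      fun n hn => hS (by exact_mod_cast left_ne_zero_of_mul hn)]
    refine sum_congr rfl fun n _ => ?_
    push_cast
    ring_nf
  have hshift : ∀ n ∈ S, ∑ᶠ m : ℤ, h n * h (n + m) * cos (m * ω) =
      ∑ n' ∈ S, h n * h n' * cos (-(n * ω) - -(n' * ω)) := fun n _ => by
    rw [← finsum_eq_sum_of_support_subset _ fun n' hn' => hS (right_ne_zero_of_mul
      (left_ne_zero_of_mul hn')), ← finsum_comp_equiv (Equiv.addLeft n)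
      (f := fun n' : ℤ => h n * h n' * cos (-(n * ω) - -(n' * ω)))]
    refine finsum_congr fun m => ?_
    simp only [Equiv.coe_addLeft]
    push_cast
    ring_nf
  have hfinite :
      ∀ n ∈ S, (Function.support fun m : ℤ => h n * h (n + m) * cos (m * ω)).Finite :=
    fun n _ => (hh.preimage (add_right_injective n).injOn).subset
      fun m hm => right_ne_zero_of_mul (left_ne_zero_of_mul hm)
  calc toeplitzSymbol (autocorrelation h) ω
      = ∑ᶠ m : ℤ, ∑ n ∈ S, h n * h (n + m) * cos (m * ω) := by
        refine finsum_congr fun m => ?_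
        rw [autocorrelation, finsum_eq_sum_of_support_subset _
          fun n hn => hS (left_ne_zero_of_mul hn), sum_mul]
    _ = ∑ n ∈ S, ∑ n' ∈ S, h n * h n' * cos (-(n * ω) - -(n' * ω)) := by
        rw [← sum_finsum_comm _ _ hfinite]
        exact sum_congr rfl hshift
    _ = _ := by rw [hH, sq_norm_sum_mul_exp]

end Autocorrelation

def tridiagonal (p₀ p₁ : ℝ) (m : ℤ) : ℝ :=
  if m = 0 then p₀ else if m = 1 ∨ m = -1 then p₁ else 0

theorem support_tridiagonal_subset (p₀ p₁ : ℝ) :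
    Function.support (tridiagonal p₀ p₁) ⊆ ({-1, 0, 1} : Finset ℤ) := by
  intro m hm
  simp only [tridiagonal, Function.mem_support] at hm
  simp only [coe_insert, coe_singleton, Set.mem_insert_iff, Set.mem_singleton_iff]
  split_ifs at hm <;> first | omega | exact absurd rfl hm

theorem tridiagonal_neg (p₀ p₁ : ℝ) (m : ℤ) :
    tridiagonal p₀ p₁ (-m) = tridiagonal p₀ p₁ m := by
  simp only [tridiagonal]
  split_ifs <;> first | rfl | omega

theorem toeplitzSymbol_tridiagonal (p₀ p₁ ω : ℝ) :
    toeplitzSymbol (tridiagonal p₀ p₁) ω = p₀ + 2 * p₁ * cos ω := by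
  rw [toeplitzSymbol, finsum_eq_sum_of_support_subset _
    ((Function.support_mul_subset_left _ _).trans (support_tridiagonal_subset p₀ p₁))]
  simp [tridiagonal]
  ring

theorem stmt_17 (h : ℤ → ℝ) (hfin : (Function.support h).Finite)
    (p₀ p₁ : ℝ)
    (Hw : ℝ → ℂ)
    (hHw : ∀ ω : ℝ, Hw ω = ∑ᶠ n : ℤ, (h n : ℂ) * Complex.exp (-Complex.I * ω * n))
    (hbound : ∀ ω ∈ Set.Icc (-Real.pi) Real.pi,
      0 ≤ p₀ + 2 * p₁ * Real.cos ω ∧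
      p₀ + 2 * p₁ * Real.cos ω ≤ ‖Hw ω‖ ^ 2) :
    ∀ (N : ℕ) (P G : Matrix (Fin N) (Fin N) ℝ),
      (∀ i j : Fin N, P i j =
        if (i : ℕ) = (j : ℕ) then p₀
        else if (i : ℕ) + 1 = (j : ℕ) ∨ (j : ℕ) + 1 = (i : ℕ) then p₁
        else 0) →
      (∀ j k : Fin N, G j k = ∑ᶠ i : ℤ, h (i - (j : ℕ)) * h (i - (k : ℕ))) →
      P.PosSemidef ∧ (G - P).PosSemidef := by
  intro N P G hP hG
  have hPT : P = toeplitz (tridiagonal p₀ p₁) fun j : Fin N => (j : ℕ) := by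
    ext j k
    rw [hP, toeplitz, of_apply, tridiagonal]
    split_ifs <;> first | rfl | omega
  have hGT : G = toeplitz (autocorrelation h) fun j : Fin N => (j : ℕ) := by
    ext j k
    rw [hG, toeplitz, of_apply, autocorrelation,
      ← finsum_comp_equiv (Equiv.addRight ((j : ℕ) : ℤ))]
    simp only [Equiv.coe_addRight, add_sub_cancel_right, add_sub_assoc]
  have htri := (Set.toFinite _).subset (support_tridiagonal_subset p₀ p₁)
  have hauto := finite_support_autocorrelation hfin
  have hdiff : (Function.support (autocorrelation h - tridiagonal p₀ p₁)).Finite :=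
    (hauto.union htri).subset (Function.support_sub _ _)
  subst hPT hGT
  refine ⟨posSemidef_toeplitz htri (tridiagonal_neg p₀ p₁) (fun ω hω => ?_) _, ?_⟩
  · rw [toeplitzSymbol_tridiagonal]
    exact (hbound ω hω).1
  · rw [← toeplitz_sub]
    refine posSemidef_toeplitz hdiff
      (fun m => by simp only [Pi.sub_apply, autocorrelation_neg, tridiagonal_neg])
      (fun ω hω => ?_) _
    rw [toeplitzSymbol_sub hauto htri, toeplitzSymbol_autocorrelation hfin,
      toeplitzSymbol_tridiagonal, ← hHw]
    linarith [(hbound ω hω).2]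
end

section
/- Let φ : ℝ → ℝ be even, with φ restricted to [0,∞) twice continuously differentiable, φ(0) = 0, right derivative φ'(0⁺) = 1 and φ''(0⁺) = -a for some a ≥ 0. Let H be a 2×2 real matrix with HᵀH having minimum eigenvalue γ_min, and let λ > 0. If the function f(x) = (1/2)‖y - Hx‖² + λφ(x₁) + λφ(x₂) is convex on ℝ², then a ≤ γ_min/λ. -/
/-!
Test convexity at the midpoint of `0` and `2t • u`, where `u` is an eigenvector of `Hᵀ H` for
`γmin`. The quadratic part contributes exactly `t² γmin ‖u‖²` to the second difference
`f 0 + f (2t • u) - 2 f (t • u) ≥ 0`, and by Taylor's theorem at `0⁺`, transported to `0⁻` by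
evenness, each penalty term contributes `λ (φ''(0⁺) + o(1)) t² uᵢ² = λ (-a + o(1)) t² uᵢ²`.
Dividing by `t²` and letting `t → 0` gives `(γmin - λ a) ‖u‖² ≥ 0`.
-/

open Set Filter Topology Asymptotics Matrix

theorem taylorWithinEval_two_second_difference (φ : ℝ → ℝ) (s : Set ℝ) (x : ℝ) :
    taylorWithinEval φ 2 s 0 (2 * x) - 2 * taylorWithinEval φ 2 s 0 x + φ 0 =
      iteratedDerivWithin 2 φ s 0 * x ^ 2 := by
  simp only [taylor_within_apply, Finset.sum_range_succ, Finset.sum_range_zero, zero_add,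
    Nat.factorial_zero, Nat.factorial_one, Nat.factorial_two, Nat.cast_one, Nat.cast_ofNat,
    inv_one, sub_zero, pow_zero, pow_one, one_mul, smul_eq_mul, iteratedDerivWithin_zero]
  ring

theorem isLittleO_second_difference_nhdsGE {φ : ℝ → ℝ} (hφ : ContDiffOn ℝ 2 φ (Ici 0)) :
    (fun s => φ (2 * s) - 2 * φ s + φ 0 - iteratedDerivWithin 2 φ (Ici 0) 0 * s ^ 2)
      =o[𝓝[≥] 0] fun s => s ^ 2 := by
  set R := fun x => φ x - taylorWithinEval φ 2 (Ici 0) 0 x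
  have hR : R =o[𝓝[≥] 0] fun s => s ^ 2 := by
    simpa only [sub_zero] using taylor_isLittleO (convex_Ici 0) self_mem_Ici hφ
  have hdouble : Tendsto (fun s : ℝ => 2 * s) (𝓝[≥] 0) (𝓝[≥] 0) := by
    refine tendsto_nhdsWithin_iff.2 ⟨?_, eventually_mem_nhdsWithin.mono fun s hs => ?_⟩
    · simpa using ((continuous_const_mul (2 : ℝ)).tendsto 0).mono_left nhdsWithin_le_nhds
    · simp only [mem_Ici] at hs ⊢; positivity
  have hR2 : (fun s => R (2 * s)) =o[𝓝[≥] 0] fun s => s ^ 2 :=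
    (hR.comp_tendsto hdouble).trans_isBigO <|
      (isBigO_refl (fun s : ℝ => s ^ 2) _).const_mul_left 4 |>.congr_left fun s => by
        simp only [Function.comp]; ring
  refine (hR2.sub (hR.const_mul_left 2)).congr_left fun s => ?_
  have := taylorWithinEval_two_second_difference φ (Ici 0) s
  simp only [R]
  linarith

theorem isLittleO_second_difference_of_even {φ : ℝ → ℝ} (heven : Function.Even φ)
    (hφ : ContDiffOn ℝ 2 φ (Ici 0)) :
    (fun s => φ (2 * s) - 2 * φ s + φ 0 - iteratedDerivWithin 2 φ (Ici 0) 0 * s ^ 2)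
      =o[𝓝 0] fun s => s ^ 2 := by
  have hGE := isLittleO_second_difference_nhdsGE hφ
  have hneg : Tendsto (fun s : ℝ => -s) (𝓝[≤] 0) (𝓝[≥] 0) := by
    refine tendsto_nhdsWithin_iff.2 ⟨?_, eventually_mem_nhdsWithin.mono fun s hs => ?_⟩
    · simpa using (continuous_neg.tendsto (0 : ℝ)).mono_left nhdsWithin_le_nhds
    · simpa using hs
  have hLE : (fun s => φ (2 * s) - 2 * φ s + φ 0 - iteratedDerivWithin 2 φ (Ici 0) 0 * s ^ 2)
      =o[𝓝[≤] 0] fun s => s ^ 2 :=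
    (hGE.comp_tendsto hneg).congr
      (fun s => by simp only [Function.comp_apply, mul_neg, heven (2 * s), heven s, neg_sq])
      (fun s => neg_sq s)
  rw [← nhdsLE_sup_nhdsGE]
  exact hLE.sup hGE

theorem tendsto_second_difference_div_sq_of_even {φ : ℝ → ℝ} (heven : Function.Even φ)
    (hφ : ContDiffOn ℝ 2 φ (Ici 0)) (c : ℝ) :
    Tendsto (fun t => (φ (2 * (t * c)) - 2 * φ (t * c) + φ 0) / t ^ 2) (𝓝[≠] 0)
      (𝓝 (iteratedDerivWithin 2 φ (Ici 0) 0 * c ^ 2)) := by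
  have hscale : Tendsto (fun t : ℝ => t * c) (𝓝 0) (𝓝 0) := by
    simpa using (continuous_mul_const c).tendsto 0
  have hD := ((isLittleO_second_difference_of_even heven hφ).comp_tendsto hscale).trans_isBigO <|
    (isBigO_refl (fun t : ℝ => t ^ 2) _).const_mul_left (c ^ 2) |>.congr_left fun t => by
      simp only [Function.comp]; ring
  have := (hD.tendsto_div_nhds_zero.mono_left (nhdsWithin_le_nhds (s := {0}ᶜ))).const_add
    (iteratedDerivWithin 2 φ (Ici 0) 0 * c ^ 2)
  rw [add_zero] at this
  refine this.congr' (eventually_nhdsWithin_of_forall fun t (ht : t ≠ 0) => ?_)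
  simp only [Function.comp]
  field_simp
  ring

theorem ConvexOn.second_difference_nonneg {E : Type*} [AddCommGroup E] [Module ℝ E] {f : E → ℝ}
    (hf : ConvexOn ℝ univ f) (x v : E) : 0 ≤ f x + f (x + (2 : ℝ) • v) - 2 * f (x + v) := by
  have hmid := hf.2 (mem_univ x) (mem_univ (x + (2 : ℝ) • v)) (by norm_num : (0 : ℝ) ≤ 1 / 2)
    (by norm_num : (0 : ℝ) ≤ 1 / 2) (by norm_num)
  rw [show (1 / 2 : ℝ) • x + (1 / 2 : ℝ) • (x + (2 : ℝ) • v) = x + v by module] at hmid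
  simp only [smul_eq_mul] at hmid
  linarith

theorem Matrix.sum_sq_sub_mulVec_second_difference {m n : Type*} [Fintype m] [Fintype n]
    (H : Matrix m n ℝ) (y : m → ℝ) (x v : n → ℝ) :
    ∑ i, (y i - (H *ᵥ x) i) ^ 2 + ∑ i, (y i - (H *ᵥ (x + (2 : ℝ) • v)) i) ^ 2
      - 2 * ∑ i, (y i - (H *ᵥ (x + v)) i) ^ 2 = 2 * (v ⬝ᵥ (Hᵀ * H) *ᵥ v) := by
  rw [← mulVec_mulVec, dotProduct_mulVec, vecMul_transpose]
  simp only [mulVec_add, mulVec_smul, Pi.add_apply, Pi.smul_apply, smul_eq_mul, dotProduct,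
    Finset.mul_sum, ← Finset.sum_add_distrib, ← Finset.sum_sub_distrib]
  exact Finset.sum_congr rfl fun i _ => by ring

theorem stmt_19_general (φ : ℝ → ℝ) (a : ℝ)
    (heven : ∀ t, φ (-t) = φ t)
    (hsmooth : ContDiffOn ℝ 2 φ (Set.Ici 0))
    (hd2 : iteratedDerivWithin 2 φ (Set.Ici 0) 0 = -a)
    (H : Matrix (Fin 2) (Fin 2) ℝ) (y : Fin 2 → ℝ) (lam : ℝ) (hlam : 0 < lam)
    (γmin : ℝ)
    (heig : ∃ u : Fin 2 → ℝ, u ≠ 0 ∧ (Hᵀ * H).mulVec u = γmin • u)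
    (hconv : ConvexOn ℝ Set.univ (fun x : Fin 2 → ℝ =>
      (1 / 2) * ∑ i, (y i - H.mulVec x i) ^ 2 + lam * φ (x 0) + lam * φ (x 1))) :
    a ≤ γmin / lam := by
  obtain ⟨u, hu, hHu⟩ := heig
  set f := fun x : Fin 2 → ℝ =>
    (1 / 2) * ∑ i, (y i - H.mulVec x i) ^ 2 + lam * φ (x 0) + lam * φ (x 1)
  set Q := fun t : ℝ => (f 0 + f ((2 : ℝ) • t • u) - 2 * f (t • u)) / t ^ 2
  have hQ : ∀ t, 0 ≤ Q t := fun t =>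
    div_nonneg (by simpa only [zero_add] using hconv.second_difference_nonneg 0 (t • u))
      (sq_nonneg t)
  have hlim : Tendsto Q (𝓝[≠] 0) (𝓝 ((γmin - lam * a) * (u ⬝ᵥ u))) := by
    have := (((tendsto_second_difference_div_sq_of_even heven hsmooth (u 0)).const_mul lam).add
      ((tendsto_second_difference_div_sq_of_even heven hsmooth (u 1)).const_mul lam)).const_add
      (γmin * (u ⬝ᵥ u))
    rw [hd2, ← add_assoc, show γmin * (u ⬝ᵥ u) + lam * (-a * u 0 ^ 2) + lam * (-a * u 1 ^ 2)
      = (γmin - lam * a) * (u ⬝ᵥ u) by simp only [dotProduct, Fin.sum_univ_two]; ring] at this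
    refine this.congr' (eventually_nhdsWithin_of_forall fun t (ht : t ≠ 0) => ?_)
    have hHtu : (t • u) ⬝ᵥ (Hᵀ * H) *ᵥ (t • u) = t ^ 2 * (γmin * (u ⬝ᵥ u)) := by
      simp only [mulVec_smul, hHu, smul_dotProduct, dotProduct_smul, smul_eq_mul]
      ring
    have hquad := sum_sq_sub_mulVec_second_difference H y 0 (t • u)
    rw [hHtu] at hquad
    simp only [zero_add] at hquad
    simp only [Q, f, Pi.smul_apply, Pi.zero_apply, smul_eq_mul]
    field_simp
    linear_combination -hquad
  have huu : 0 < u ⬝ᵥ u := lt_of_le_of_ne (Finset.sum_nonneg fun i _ => mul_self_nonneg (u i))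
    (Ne.symm (dotProduct_self_eq_zero.not.2 hu))
  have hgap := (mul_nonneg_iff_of_pos_right huu).1 (ge_of_tendsto hlim (Eventually.of_forall hQ))
  rw [le_div_iff₀ hlam]
  linarith

theorem stmt_19 (φ : ℝ → ℝ) (a : ℝ) (ha : 0 ≤ a)
    (heven : ∀ t, φ (-t) = φ t)
    (hsmooth : ContDiffOn ℝ 2 φ (Set.Ici 0))
    (h0 : φ 0 = 0)
    (hd1 : derivWithin φ (Set.Ici 0) 0 = 1)
    (hd2 : iteratedDerivWithin 2 φ (Set.Ici 0) 0 = -a)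
    (H : Matrix (Fin 2) (Fin 2) ℝ) (y : Fin 2 → ℝ) (lam : ℝ) (hlam : 0 < lam)
    (γmin : ℝ)
    (heig : ∃ u : Fin 2 → ℝ, u ≠ 0 ∧ (Hᵀ * H).mulVec u = γmin • u)
    (hmin : ∀ x : Fin 2 → ℝ, γmin * (x ⬝ᵥ x) ≤ x ⬝ᵥ (Hᵀ * H).mulVec x)
    (hconv : ConvexOn ℝ Set.univ (fun x : Fin 2 → ℝ =>
      (1 / 2) * ∑ i, (y i - H.mulVec x i) ^ 2 + lam * φ (x 0) + lam * φ (x 1))) :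
    a ≤ γmin / lam :=
  stmt_19_general φ a heven hsmooth hd2 H y lam hlam γmin heig hconv
end
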